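/- Let T, the constants, and a gadget system satisfying (G1)–(G9) be as in the context. Let D₁ ⊆ A₁, let μ ∈ {+,−}, let θ₁ ≤ φ₁ and set θ₂ := θ₁/(2^7 ρ). For each α ∈ D₁, s ∈ S(α) and ν ∈ {+,−}, let M^ν(s) be a subset of V_okay of size at least θ₁kt. Then there is a subset D₂ ⊆ D₁ of size at least |D₁|/(36ρ²) such that for every α ∈ D₂, every s ∈ S(α) and every ν ∈ {+,−}, there are at least θ₂kt vertices u ∈ M^ν(s) with |N^μ_good(u) ∩ W(D₂ ∖ {α})| ≥ θ₂kt. -/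

import Mathlib

/-!
Colour the indices uniformly at random with `L = 16ρ` colours and look, for each `α`, at the
other indices of its colour. As the gadgets are disjoint, a vertex `u` keeps fewer than `θ₂kt`
of its at least `2θ₂kt` relevant neighbours only if these indices carry half of the weights
`|N(u) ∩ U(β)|`, which by Markov has probability at most `2/L`. Markov once more on each of the
at most `2ρ` sets `M^ν(s)`, and a union bound, show that `α` fails with probability at most
`8ρ/L = 1/2`. Some colouring therefore has at least half of `D₁` succeeding, and its best colour
class keeps at least `|D₁|/(2L)` of them; success only gets easier on passing to a subset.
-/

open Finset

namespace TournamentPartition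

/-! ### Basic constants from the paper -/

def rho : ℕ := 10 ^ 4
def sigma1 : ℕ := 10 ^ 60
def sigma2 : ℕ := 10 ^ 4
def sigma3 : ℕ := 10

/-- `s` contains at least `m` elements satisfying `P`. -/
def ManyIn {α : Type*} (s : Finset α) (m : ℝ) (P : α → Prop) : Prop :=
  ∃ s' : Finset α, s' ⊆ s ∧ m ≤ (s'.card : ℝ) ∧ ∀ x ∈ s', P x

section Defs

variable {V I : Type*}

/-- `E u v` means that the edge between `u` and `v` is directed from `u` to `v`. -/
def IsTournament (E : V → V → Prop) : Prop :=
  (∀ v, ¬ E v v) ∧ ∀ u v : V, u ≠ v → (E u v ↔ ¬ E v u)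

/-- There is a directed path from `u` to `v` all of whose vertices lie in `S`. -/
def ReachWithin (E : V → V → Prop) (S : Set V) (u v : V) : Prop :=
  Relation.ReflTransGen (fun a b => a ∈ S ∧ b ∈ S ∧ E a b) u v

def StronglyConnectedOn (E : V → V → Prop) (S : Set V) : Prop :=
  ∀ u ∈ S, ∀ v ∈ S, ReachWithin E S u v

/-- A directed path, as a list of distinct vertices with consecutive edges. -/
def IsDiPath (E : V → V → Prop) (l : List V) : Prop :=
  l ≠ [] ∧ l.Nodup ∧ l.Chain' E

variable [Fintype V] [DecidableEq V]

/-- The set `S` induces a strongly `k`-connected subtournament. -/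
def StronglyKConnectedOn (E : V → V → Prop) (k : ℕ) (S : Finset V) : Prop :=
  k + 1 ≤ S.card ∧
    ∀ Z : Finset V, Z.card ≤ k → StronglyConnectedOn E ((S \ Z : Finset V) : Set V)

def StronglyKConnected (E : V → V → Prop) (k : ℕ) : Prop :=
  StronglyKConnectedOn E k Finset.univ

def outN (E : V → V → Prop) [DecidableRel E] (u : V) : Finset V :=
  Finset.univ.filter fun v => E u v

def inN (E : V → V → Prop) [DecidableRel E] (u : V) : Finset V :=
  Finset.univ.filter fun v => E v u

/-- A system of gadgets `U(α)` with special sets `S⁺(α), S⁻(α) ⊆ S(α) ⊆ U(α)`,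
exceptional sets `X(α)` and special vertices `s⁺(α), s⁻(α) ∈ S(α)`. -/
structure GadgetSystem (V I : Type*) where
  U : I → Finset V
  S : I → Finset V
  Sp : I → Finset V
  Sm : I → Finset V
  X : I → Finset V
  sp : I → V
  sm : I → V
  sp_mem : ∀ α, sp α ∈ S α
  sm_mem : ∀ α, sm α ∈ S α
  Sp_subset : ∀ α, Sp α ⊆ S α
  Sm_subset : ∀ α, Sm α ⊆ S α
  S_subset : ∀ α, S α ⊆ U α

variable [Fintype I] [DecidableEq I]

def Vokay (G : GadgetSystem V I) : Finset V :=
  Finset.univ \ Finset.univ.biUnion G.S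

/-- Vertices of `V_okay` having no out-neighbour in `S⁻(α)` for at least `k*t` indices `α`. -/
def VbadP (E : V → V → Prop) [DecidableRel E] (G : GadgetSystem V I) (k t : ℕ) : Finset V :=
  (Vokay G).filter fun u =>
    k * t ≤ (Finset.univ.filter fun α : I => ∀ v ∈ G.Sm α, ¬ E u v).card

/-- Vertices of `V_okay` having no in-neighbour in `S⁺(α)` for at least `k*t` indices `α`. -/
def VbadM (E : V → V → Prop) [DecidableRel E] (G : GadgetSystem V I) (k t : ℕ) : Finset V :=
  (Vokay G).filter fun u =>
    k * t ≤ (Finset.univ.filter fun α : I => ∀ v ∈ G.Sp α, ¬ E v u).card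

def Vbad (E : V → V → Prop) [DecidableRel E] (G : GadgetSystem V I) (k t : ℕ) : Finset V :=
  VbadP E G k t ∩ VbadM E G k t

def VgoodP (E : V → V → Prop) [DecidableRel E] (G : GadgetSystem V I) (k t : ℕ) : Finset V :=
  Vokay G \ VbadP E G k t

def VgoodM (E : V → V → Prop) [DecidableRel E] (G : GadgetSystem V I) (k t : ℕ) : Finset V :=
  Vokay G \ VbadM E G k t

def Vgood (E : V → V → Prop) [DecidableRel E] (G : GadgetSystem V I) (k t : ℕ) : Finset V :=
  VgoodP E G k t ∩ VgoodM E G k t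

/-- `W(C) = V ∖ ⋃_{α ∈ C} U(α)`. -/
def Wof (G : GadgetSystem V I) (C : Finset I) : Finset V :=
  Finset.univ \ C.biUnion G.U

def NokayP (E : V → V → Prop) [DecidableRel E] (G : GadgetSystem V I) (u : V) : Finset V :=
  outN E u ∩ Vokay G

def NokayM (E : V → V → Prop) [DecidableRel E] (G : GadgetSystem V I) (u : V) : Finset V :=
  inN E u ∩ Vokay G

def NgoodP (E : V → V → Prop) [DecidableRel E] (G : GadgetSystem V I) (k t : ℕ) (u : V) :
    Finset V :=
  outN E u ∩ VgoodP E G k t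

def NgoodM (E : V → V → Prop) [DecidableRel E] (G : GadgetSystem V I) (k t : ℕ) (u : V) :
    Finset V :=
  inN E u ∩ Vgood E G k t

/-! ### Properties (G1)–(G9) -/

def CondG1 (G : GadgetSystem V I) : Prop :=
  ∀ α β : I, α ≠ β → Disjoint (G.U α) (G.U β)

def CondG2 (G : GadgetSystem V I) (k t : ℕ) : Prop :=
  ∀ α : I, (G.S α).card ≤ rho ∧ (G.X α).card ≤ rho * sigma1 * k * t

def CondG3 (E : V → V → Prop) (G : GadgetSystem V I) : Prop :=
  ∀ α : I, ∀ u ∈ G.Sm α, ∀ v ∈ G.Sp α, ReachWithin E (G.U α : Set V) u v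

def CondG4 (E : V → V → Prop) (G : GadgetSystem V I) : Prop :=
  ∀ α : I, ∀ x : V, x ∉ G.X α →
    (E x (G.sp α) → ∀ u ∈ G.U α \ G.S α, E x u) ∧
    (E (G.sm α) x → ∀ u ∈ G.U α \ G.S α, E u x)

def CondG5 (E : V → V → Prop) [DecidableRel E] (G : GadgetSystem V I) (k t : ℕ) : Prop :=
  ∀ u ∈ Vokay G,
    10 ^ 12 * (VbadP E G k t).card ≤ (outN E u).card ∧
    10 ^ 12 * (VbadM E G k t).card ≤ (inN E u).card

/-- Properties (G1)–(G5) of a gadget system. -/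
def GadgetHyp (E : V → V → Prop) [DecidableRel E] (G : GadgetSystem V I) (k t : ℕ) : Prop :=
  CondG1 G ∧ CondG2 G k t ∧ CondG3 E G ∧ CondG4 E G ∧ CondG5 E G k t

def CondG6 (E : V → V → Prop) [DecidableRel E] (G : GadgetSystem V I) (k t : ℕ) : Prop :=
  (Fintype.card V : ℝ) / 2 ≤ ((Vgood E G k t).card : ℝ)

def CondG7 (E : V → V → Prop) [DecidableRel E] (G : GadgetSystem V I) (k t τ₁ : ℕ) : Prop :=
  ∀ u ∈ Vokay G,
    max ((10 : ℝ) ^ 11 * ((VbadP E G k t).card : ℝ)) (((τ₁ * k * t : ℕ) : ℝ) / 2)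
      ≤ ((outN E u ∩ VgoodP E G k t).card : ℝ)

def CondG8 (E : V → V → Prop) [DecidableRel E] (G : GadgetSystem V I) (k t τ₁ : ℕ) : Prop :=
  ∀ u ∈ Vokay G,
    max ((10 : ℝ) ^ 11 * ((VbadM E G k t).card : ℝ)) (((τ₁ * k * t : ℕ) : ℝ) / 2)
      ≤ ((inN E u ∩ Vgood E G k t).card : ℝ)

def CondG9 (E : V → V → Prop) [DecidableRel E] (G : GadgetSystem V I) (k t τ₁ : ℕ) : Prop :=
  ∀ u : V,
    max ((10 : ℝ) ^ 11 * (((Finset.univ \ Vokay G).card : ℕ) : ℝ)) (((τ₁ * k * t : ℕ) : ℝ) / 2)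
      ≤ ((outN E u ∩ Vokay G).card : ℝ) ∧
    max ((10 : ℝ) ^ 11 * (((Finset.univ \ Vokay G).card : ℕ) : ℝ)) (((τ₁ * k * t : ℕ) : ℝ) / 2)
      ≤ ((inN E u ∩ Vokay G).card : ℝ)

/-- Properties (G6)–(G9) of a gadget system. -/
def GadgetHyp2 (E : V → V → Prop) [DecidableRel E] (G : GadgetSystem V I) (k t τ₁ : ℕ) :
    Prop :=
  CondG6 E G k t ∧ CondG7 E G k t τ₁ ∧ CondG8 E G k t τ₁ ∧ CondG9 E G k t τ₁

/-! ### Available vertices -/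

def AvailA1 (E : V → V → Prop) [DecidableRel E] (G : GadgetSystem V I) (k t : ℕ)
    (W : Finset V) (u : V) : Prop :=
  u ∈ Vgood E G k t ∩ W

def AvailA2 (E : V → V → Prop) [DecidableRel E] (G : GadgetSystem V I) (k t τ₂ : ℕ)
    (W : Finset V) (u : V) : Prop :=
  u ∈ (VgoodP E G k t \ VgoodM E G k t) ∩ W ∧
    ManyIn (inN E u) ((τ₂ * k * t : ℕ) : ℝ) (AvailA1 E G k t W)

def AvailA3 (E : V → V → Prop) [DecidableRel E] (G : GadgetSystem V I) (k t τ₂ : ℕ)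
    (W : Finset V) (u : V) : Prop :=
  u ∈ (VgoodM E G k t \ VgoodP E G k t) ∩ W ∧
    ManyIn (outN E u) ((τ₂ * k * t : ℕ) : ℝ)
      (fun v => AvailA1 E G k t W v ∨ AvailA2 E G k t τ₂ W v)

def AvailA4 (E : V → V → Prop) [DecidableRel E] (G : GadgetSystem V I) (k t τ₂ : ℕ)
    (W : Finset V) (u : V) : Prop :=
  u ∈ Vbad E G k t ∩ W ∧
    ManyIn (outN E u) ((τ₂ * k * t : ℕ) : ℝ)
      (fun v => AvailA1 E G k t W v ∨ AvailA2 E G k t τ₂ W v) ∧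
    ManyIn (inN E u) ((τ₂ * k * t : ℕ) : ℝ) (AvailA1 E G k t W)

/-- `u` is available (for `α`) with respect to a family `𝒜`, where `W = W(𝒜 ∖ {α})`. -/
def Available (E : V → V → Prop) [DecidableRel E] (G : GadgetSystem V I) (k t τ₂ : ℕ)
    (W : Finset V) (u : V) : Prop :=
  AvailA1 E G k t W u ∨ AvailA2 E G k t τ₂ W u ∨ AvailA3 E G k t τ₂ W u ∨
    AvailA4 E G k t τ₂ W u

/-! ### Eligible and helpful vertices -/

/-- Indices `α ∈ 𝒜` such that `u` has no out-neighbour in `S⁻(α)`. -/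
def MissOut (E : V → V → Prop) [DecidableRel E] (G : GadgetSystem V I) (𝒜 : Finset I)
    (u : V) : Finset I :=
  𝒜.filter fun α => ∀ v ∈ G.Sm α, ¬ E u v

/-- Indices `α ∈ 𝒜` such that `u` has no in-neighbour in `S⁺(α)`. -/
def MissIn (E : V → V → Prop) [DecidableRel E] (G : GadgetSystem V I) (𝒜 : Finset I)
    (u : V) : Finset I :=
  𝒜.filter fun α => ∀ v ∈ G.Sp α, ¬ E v u

def Nice1 (E : V → V → Prop) [DecidableRel E] (G : GadgetSystem V I) (k t : ℕ)
    (𝒜 : Finset I) (W : Finset V) (u : V) : Prop :=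
  u ∈ Vgood E G k t ∩ W ∧ (MissOut E G 𝒜 u).card ≤ k ∧ (MissIn E G 𝒜 u).card ≤ k

def Nice2 (E : V → V → Prop) [DecidableRel E] (G : GadgetSystem V I) (k t : ℕ) (m : ℝ)
    (𝒜 : Finset I) (W : Finset V) (u : V) : Prop :=
  u ∈ (VgoodP E G k t \ VgoodM E G k t) ∩ W ∧ (MissOut E G 𝒜 u).card ≤ k ∧
    ManyIn (inN E u) m (Nice1 E G k t 𝒜 W)

def Nice3 (E : V → V → Prop) [DecidableRel E] (G : GadgetSystem V I) (k t : ℕ) (m : ℝ)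
    (𝒜 : Finset I) (W : Finset V) (u : V) : Prop :=
  u ∈ (VgoodM E G k t \ VgoodP E G k t) ∩ W ∧ (MissIn E G 𝒜 u).card ≤ k ∧
    ManyIn (outN E u) m (fun v => Nice1 E G k t 𝒜 W v ∨ Nice2 E G k t m 𝒜 W v)

def Nice4 (E : V → V → Prop) [DecidableRel E] (G : GadgetSystem V I) (k t : ℕ) (m : ℝ)
    (𝒜 : Finset I) (W : Finset V) (u : V) : Prop :=
  u ∈ Vbad E G k t ∩ W ∧
    ManyIn (inN E u) m (Nice1 E G k t 𝒜 W) ∧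
    ManyIn (outN E u) m (fun v => Nice1 E G k t 𝒜 W v ∨ Nice2 E G k t m 𝒜 W v)

def NiceFor (E : V → V → Prop) [DecidableRel E] (G : GadgetSystem V I) (k t : ℕ) (m : ℝ)
    (𝒜 : Finset I) (W : Finset V) (u : V) : Prop :=
  Nice1 E G k t 𝒜 W u ∨ Nice2 E G k t m 𝒜 W u ∨ Nice3 E G k t m 𝒜 W u ∨
    Nice4 E G k t m 𝒜 W u

/-- `u` is eligible for `𝒜` in `W`. -/
def Eligible (E : V → V → Prop) [DecidableRel E] (G : GadgetSystem V I) (k t τ₃ : ℕ)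
    (𝒜 : Finset I) (W : Finset V) (u : V) : Prop :=
  NiceFor E G k t ((τ₃ * k * t : ℕ) : ℝ) 𝒜 W u

/-- `u` is helpful for `𝒜` in `W`. -/
def Helpful (E : V → V → Prop) [DecidableRel E] (G : GadgetSystem V I) (k t : ℕ)
    (𝒜 : Finset I) (W : Finset V) (u : V) : Prop :=
  NiceFor E G k t (k : ℝ) 𝒜 W u

end Defs

noncomputable def phi0 (τ₁ : ℕ) : ℝ := (τ₁ : ℝ) / 4
noncomputable def phi1 (τ₁ : ℕ) : ℝ := phi0 τ₁ / (2 ^ 6 * (rho : ℝ))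
noncomputable def phi2 (τ₁ : ℕ) : ℝ := phi1 τ₁ / (2 ^ 14 * (rho : ℝ) ^ 2)
noncomputable def phi3 (τ₁ : ℕ) : ℝ := phi2 τ₁ / (2 ^ 14 * (rho : ℝ) ^ 2)

end TournamentPartition

namespace Finset

variable {α β : Type*}

theorem card_filter_lt_two_mul_le_of_sum_le (F : Finset α) (g : α → ℕ) {x K : ℕ}
    (h : ∑ f ∈ F, g f ≤ K * x) : #{f ∈ F | x < 2 * g f} ≤ 2 * K := by
  refine Nat.le_of_mul_le_mul_left ?_ x.succ_pos
  calc (x + 1) * #{f ∈ F | x < 2 * g f}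
      = #{f ∈ F | x < 2 * g f} • (x + 1) := by rw [smul_eq_mul, mul_comm]
    _ ≤ ∑ f ∈ F with x < 2 * g f, 2 * g f := card_nsmul_le_sum _ _ _ fun f hf => (mem_filter.1 hf).2
    _ ≤ ∑ f ∈ F, 2 * g f := sum_le_sum_of_subset (filter_subset _ _)
    _ ≤ (x + 1) * (2 * K) := by rw [← mul_sum]; nlinarith

theorem card_filter_lt_two_mul_card_filter_le (F : Finset α) (M : Finset β) (E : β → α → Prop)
    [∀ u f, Decidable (E u f)] {K : ℕ} (hE : ∀ u ∈ M, #{f ∈ F | E u f} ≤ K) :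
    #{f ∈ F | #M < 2 * #{u ∈ M | E u f}} ≤ 2 * K := by
  refine card_filter_lt_two_mul_le_of_sum_le F _ ?_
  calc ∑ f ∈ F, #{u ∈ M | E u f} = ∑ u ∈ M, #{f ∈ F | E u f} := by
        simp only [card_filter]; exact sum_comm
    _ ≤ K * #M := by rw [mul_comm]; exact sum_le_card_nsmul _ _ _ hE

variable {ι κ : Type*} [DecidableEq ι] [DecidableEq κ]

def colorMates (s : Finset ι) (f : ι → κ) (a : ι) : Finset ι :=
  {b ∈ s.erase a | f b = f a}

variable [Fintype ι] [Fintype κ]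

theorem card_filter_apply_eq_apply {a b : ι} (hab : a ≠ b) :
    #{f : ι → κ | f b = f a} = Fintype.card κ ^ (Fintype.card ι - 1) := by
  rw [card_filter, ← (Equiv.funSplitAt b κ).symm.sum_comp, Fintype.sum_prod_type_right]
  simp [Equiv.funSplitAt, hab]

theorem sum_sum_colorMates (s : Finset ι) (a : ι) (w : ι → ℕ) :
    ∑ f : ι → κ, ∑ b ∈ s.colorMates f a, w b
      = Fintype.card κ ^ (Fintype.card ι - 1) * ∑ b ∈ s.erase a, w b := by
  simp only [colorMates, sum_filter]
  rw [sum_comm, mul_sum]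
  refine sum_congr rfl fun b hb => ?_
  rw [← sum_filter, sum_const, smul_eq_mul, card_filter_apply_eq_apply (ne_of_mem_erase hb).symm]

theorem card_filter_lt_two_mul_sum_colorMates_le (s : Finset ι) (a : ι) (w : ι → ℕ) {x : ℕ}
    (hw : ∑ b ∈ s, w b ≤ x) :
    #{f : ι → κ | x < 2 * ∑ b ∈ s.colorMates f a, w b}
      ≤ 2 * Fintype.card κ ^ (Fintype.card ι - 1) := by
  refine card_filter_lt_two_mul_le_of_sum_le _ _ ?_
  rw [sum_sum_colorMates]
  exact Nat.mul_le_mul_left _ ((sum_le_sum_of_subset (erase_subset a s)).trans hw)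

theorem exists_subset_forall_of_two_mul_card_filter_not_le [Nonempty κ] (D : Finset ι)
    (P : ι → Finset ι → Prop) [∀ a C, Decidable (P a C)]
    (hP : ∀ a C C', C' ⊆ C → P a C → P a C')
    (hbad : ∀ a ∈ D,
      2 * #{f : ι → κ | ¬ P a (D.colorMates f a)} ≤ Fintype.card κ ^ Fintype.card ι) :
    ∃ D' ⊆ D, #D ≤ 2 * Fintype.card κ * #D' ∧ ∀ a ∈ D', P a (D'.erase a) := by
  obtain ⟨f, -, hf⟩ : ∃ f ∈ (univ : Finset (ι → κ)),
      2 * #{a ∈ D | ¬ P a (D.colorMates f a)} ≤ #D := by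
    refine exists_le_of_sum_le univ_nonempty ?_
    calc ∑ f : ι → κ, 2 * #{a ∈ D | ¬ P a (D.colorMates f a)}
        = ∑ a ∈ D, 2 * #{f : ι → κ | ¬ P a (D.colorMates f a)} := by
          simp only [card_filter, mul_sum]; exact sum_comm
      _ ≤ ∑ a ∈ D, Fintype.card κ ^ Fintype.card ι := sum_le_sum hbad
      _ = ∑ _f : ι → κ, #D := by simp [mul_comm]
  have hgood : #D ≤ 2 * #{a ∈ D | P a (D.colorMates f a)} := by
    have := card_filter_add_card_filter_not (s := D) (fun a => P a (D.colorMates f a))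
    omega
  set good := {a ∈ D | P a (D.colorMates f a)}
  obtain ⟨j, -, hj⟩ : ∃ j ∈ (univ : Finset κ), #good ≤ Fintype.card κ * #{a ∈ good | f a = j} := by
    refine exists_le_of_sum_le univ_nonempty ?_
    rw [← mul_sum, ← card_eq_sum_card_fiberwise fun a _ => mem_univ (f a)]
    simp
  refine ⟨{a ∈ good | f a = j}, (filter_subset _ _).trans (filter_subset _ _), by nlinarith, ?_⟩
  intro a ha
  simp only [good, mem_filter] at ha
  refine hP a _ _ (fun b hb => ?_) ha.1.2
  simp only [mem_erase, mem_filter, good] at hb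
  simp only [colorMates, mem_filter, mem_erase]
  exact ⟨⟨hb.1, hb.2.1.1⟩, hb.2.2.trans ha.2.symm⟩

end Finset

namespace TournamentPartition

theorem manyIn_of_two_mul_card_filter_not_le {α : Type*} {s : Finset α} {m : ℝ} {P : α → Prop}
    [DecidablePred P] (hm : 2 * m ≤ #s) (h : 2 * #{x ∈ s | ¬ P x} ≤ #s) : ManyIn s m P := by
  refine ⟨{x ∈ s | P x}, filter_subset _ _, ?_, fun x hx => (mem_filter.1 hx).2⟩
  have hsplit := card_filter_add_card_filter_not (s := s) fun x => P x
  have : #s ≤ 2 * #{x ∈ s | P x} := by omega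
  have : (#s : ℝ) ≤ 2 * #{x ∈ s | P x} := by exact_mod_cast this
  linarith

section Gadgets

variable {V I : Type*} [DecidableEq V] {G : GadgetSystem V I}

theorem sum_card_inter_U_le (hG1 : CondG1 G) (A : Finset V) (s : Finset I) :
    ∑ β ∈ s, #(A ∩ G.U β) ≤ #A := by
  rw [← card_biUnion fun β _ γ _ hne =>
    (hG1 β γ hne).mono inter_subset_right inter_subset_right]
  exact card_le_card (biUnion_subset.2 fun _ _ => inter_subset_left)

variable [Fintype V]

theorem Wof_anti {C C' : Finset I} (h : C' ⊆ C) : Wof G C ⊆ Wof G C' :=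
  sdiff_subset_sdiff subset_rfl (biUnion_subset_biUnion_of_subset_left _ h)

theorem card_le_card_inter_Wof_add_sum (A : Finset V) (C : Finset I) :
    #A ≤ #(A ∩ Wof G C) + ∑ β ∈ C, #(A ∩ G.U β) := by
  have hsplit : A ⊆ (A ∩ Wof G C) ∪ C.biUnion fun β => A ∩ G.U β := by
    intro v hv
    by_cases hvU : ∃ β ∈ C, v ∈ G.U β
    · simp only [mem_union, mem_biUnion, mem_inter]; tauto
    · simp_all [Wof]
  exact (card_le_card hsplit).trans
    ((card_union_le _ _).trans (Nat.add_le_add_left card_biUnion_le _))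

def KeepsManyNeighbours (G : GadgetSystem V I) (Ng : V → Finset V) (M : I → V → Bool → Finset V)
    (m : ℝ) (α : I) (C : Finset I) : Prop :=
  ∀ s ∈ G.S α, ∀ ν : Bool, ManyIn (M α s ν) m fun u => m ≤ #(Ng u ∩ Wof G C)

theorem KeepsManyNeighbours.anti {Ng : V → Finset V} {M : I → V → Bool → Finset V} {m : ℝ}
    {α : I} {C C' : Finset I} (h : C' ⊆ C) (hC : KeepsManyNeighbours G Ng M m α C) :
    KeepsManyNeighbours G Ng M m α C' := by
  intro s hs ν
  obtain ⟨s', hs'M, hcard, hs'⟩ := hC s hs ν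
  exact ⟨s', hs'M, hcard, fun u hu =>
    (hs' u hu).trans (by exact_mod_cast card_le_card (inter_subset_inter_left (Wof_anti h)))⟩

variable [Fintype I] [DecidableEq I] {κ : Type*} [Fintype κ] [DecidableEq κ]

theorem card_filter_card_inter_Wof_colorMates_lt_le (hG1 : CondG1 G) (D : Finset I) (α : I)
    {A : Finset V} {m : ℝ} (hA : 2 * m ≤ #A) :
    #{f : I → κ | (#(A ∩ Wof G (D.colorMates f α)) : ℝ) < m}
      ≤ 2 * Fintype.card κ ^ (Fintype.card I - 1) := by
  refine (card_le_card fun f => ?_).trans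
    (card_filter_lt_two_mul_sum_colorMates_le D α _ (sum_card_inter_U_le hG1 A D))
  simp only [mem_filter, mem_univ, true_and]
  intro hf
  set S := ∑ β ∈ D.colorMates f α, #(A ∩ G.U β)
  have h : (#A : ℝ) ≤ #(A ∩ Wof G (D.colorMates f α)) + (S : ℝ) := by
    exact_mod_cast card_le_card_inter_Wof_add_sum A (D.colorMates f α)
  have : (#A : ℝ) < 2 * (S : ℝ) := by linarith
  exact_mod_cast this

open Classical in
theorem card_filter_not_keepsManyNeighbours_colorMates_le (hG1 : CondG1 G) (D : Finset I) (α : I)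
    {Ng : V → Finset V} {M : I → V → Bool → Finset V} {m : ℝ}
    (hM : ∀ s ∈ G.S α, ∀ ν, 2 * m ≤ #(M α s ν) ∧ ∀ u ∈ M α s ν, 2 * m ≤ #(Ng u)) :
    #{f : I → κ | ¬ KeepsManyNeighbours G Ng M m α (D.colorMates f α)}
      ≤ 8 * #(G.S α) * Fintype.card κ ^ (Fintype.card I - 1) := by
  set bad := fun (p : V × Bool) (f : I → κ) => #(M α p.1 p.2) <
    2 * #{u ∈ M α p.1 p.2 | (#(Ng u ∩ Wof G (D.colorMates f α)) : ℝ) < m}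
  calc #{f : I → κ | ¬ KeepsManyNeighbours G Ng M m α (D.colorMates f α)}
      ≤ #((G.S α ×ˢ univ).biUnion fun p => {f : I → κ | bad p f}) := by
        refine card_le_card fun f => ?_
        simp only [KeepsManyNeighbours, mem_filter, mem_univ, true_and, not_forall, mem_biUnion,
          mem_product, and_true, Prod.exists]
        rintro ⟨s, hs, ν, hnot⟩
        refine ⟨s, ν, hs, ?_⟩
        contrapose! hnot
        refine manyIn_of_two_mul_card_filter_not_le (hM s hs ν).1 ?_
        simpa only [bad, not_le, not_lt] using hnot
    _ ≤ ∑ p ∈ G.S α ×ˢ univ, #{f : I → κ | bad p f} := card_biUnion_le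
    _ ≤ ∑ _p ∈ G.S α ×ˢ univ, 2 * (2 * Fintype.card κ ^ (Fintype.card I - 1)) := by
        refine sum_le_sum fun p hp => card_filter_lt_two_mul_card_filter_le _ _ _ fun u hu => ?_
        obtain ⟨hs, -⟩ := mem_product.1 hp
        exact card_filter_card_inter_Wof_colorMates_lt_le hG1 D α ((hM p.1 hs p.2).2 u hu)
    _ = 8 * #(G.S α) * Fintype.card κ ^ (Fintype.card I - 1) := by
        rw [sum_const, card_product, card_univ, Fintype.card_bool, smul_eq_mul]; ring

open Classical in
theorem two_mul_card_filter_not_keepsManyNeighbours_colorMates_le (hG1 : CondG1 G)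
    (D : Finset I) (α : I) (hS : #(G.S α) ≤ rho) {Ng : V → Finset V}
    {M : I → V → Bool → Finset V} {m : ℝ}
    (hM : ∀ s ∈ G.S α, ∀ ν, 2 * m ≤ #(M α s ν) ∧ ∀ u ∈ M α s ν, 2 * m ≤ #(Ng u)) :
    2 * #{f : I → Fin (16 * rho) | ¬ KeepsManyNeighbours G Ng M m α (D.colorMates f α)}
      ≤ (16 * rho) ^ Fintype.card I := by
  have hbad := card_filter_not_keepsManyNeighbours_colorMates_le hG1 D α (κ := Fin (16 * rho)) hM
  rw [Fintype.card_fin] at hbad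
  calc 2 * _ ≤ 2 * (8 * rho * (16 * rho) ^ (Fintype.card I - 1)) := by
        gcongr; exact hbad.trans (by gcongr)
    _ = (16 * rho) ^ (Fintype.card I - 1 + 1) := by ring
    _ = _ := by rw [Nat.sub_add_cancel (Fintype.card_pos_iff.2 ⟨α⟩)]

end Gadgets

theorem four_mul_div_le_of_le_phi1 {τ₁ : ℕ} {θ₁ : ℝ} (hθ₁ : θ₁ ≤ phi1 τ₁) :
    4 * (θ₁ / (2 ^ 7 * (rho : ℝ))) ≤ τ₁ := by
  have hτ : (0 : ℝ) ≤ τ₁ := τ₁.cast_nonneg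
  simp only [phi1, phi0, rho] at hθ₁ ⊢
  push_cast at hθ₁ ⊢
  linarith

/-- Lemma 4.9. -/
theorem statement10 :
    ∃ C : ℕ, ∀ (τ₁ k t : ℕ), C ≤ τ₁ → C * τ₁ ≤ k → 2 ≤ t →
      ∀ (V : Type) [Fintype V] [DecidableEq V] (E : V → V → Prop) [DecidableRel E],
        IsTournament E → StronglyKConnected E (τ₁ * k * t) →
        ∀ G : GadgetSystem V (Fin (sigma1 * k * t)),
          GadgetHyp E G k t → GadgetHyp2 E G k t τ₁ →
          ∀ (D₁ : Finset (Fin (sigma1 * k * t))) (Ng : V → Finset V),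
            (Ng = NgoodP E G k t ∨ Ng = NgoodM E G k t) →
            ∀ (θ₁ θ₂ : ℝ), θ₁ ≤ phi1 τ₁ → θ₂ = θ₁ / (2 ^ 7 * (rho : ℝ)) →
            ∀ M : Fin (sigma1 * k * t) → V → Bool → Finset V,
              (∀ α ∈ D₁, ∀ s ∈ G.S α, ∀ ν : Bool,
                M α s ν ⊆ Vokay G ∧ θ₁ * k * t ≤ ((M α s ν).card : ℝ)) →
              ∃ D₂ : Finset (Fin (sigma1 * k * t)), D₂ ⊆ D₁ ∧
                (D₁.card : ℝ) / (36 * (rho : ℝ) ^ 2) ≤ (D₂.card : ℝ) ∧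
                ∀ α ∈ D₂, ∀ s ∈ G.S α, ∀ ν : Bool,
                  ManyIn (M α s ν) (θ₂ * k * t)
                    (fun u => θ₂ * k * t ≤
                      ((Ng u ∩ Wof G (D₂.erase α)).card : ℝ)) := by
  classical
  refine ⟨0, fun τ₁ k t _ _ _ V _ _ E _ _ _ G hG hG2 D₁ Ng hNg θ₁ θ₂ hθ₁ hθ₂ M hM => ?_⟩
  have hkt : (0 : ℝ) ≤ k * t := by positivity
  have hdeg : ∀ u ∈ Vokay G, 2 * (θ₂ * k * t) ≤ #(Ng u) := fun u hu => by
    have h4 := mul_le_mul_of_nonneg_right (hθ₂ ▸ four_mul_div_le_of_le_phi1 hθ₁) hkt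
    have hNg : (((τ₁ * k * t : ℕ) : ℝ) / 2) ≤ #(Ng u) := by
      rcases hNg with rfl | rfl
      exacts [(le_max_right _ _).trans (hG2.2.1 u hu), (le_max_right _ _).trans (hG2.2.2.1 u hu)]
    push_cast at hNg
    linarith
  have hsize : ∀ α ∈ D₁, ∀ s ∈ G.S α, ∀ ν, 2 * (θ₂ * k * t) ≤ #(M α s ν) := fun α hα s hs ν => by
    have hM' := (hM α hα s hs ν).2
    have hcard : (0 : ℝ) ≤ #(M α s ν) := Nat.cast_nonneg _
    simp only [hθ₂, rho] at hM' ⊢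
    push_cast
    rcases le_total 0 (θ₁ * k * t) with h | h <;> nlinarith
  have : Nonempty (Fin (16 * rho)) := ⟨⟨0, by norm_num [rho]⟩⟩
  obtain ⟨D₂, hD₂, hcard, hkeep⟩ := Finset.exists_subset_forall_of_two_mul_card_filter_not_le
    (κ := Fin (16 * rho)) D₁ (KeepsManyNeighbours G Ng M (θ₂ * k * t))
    (fun _ _ _ h => KeepsManyNeighbours.anti h) fun α hα => by
      simpa only [Fintype.card_fin] using
        two_mul_card_filter_not_keepsManyNeighbours_colorMates_le hG.1 D₁ α (hG.2.1 α).1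
          fun s hs ν => ⟨hsize α hα s hs ν, fun u hu => hdeg u ((hM α hα s hs ν).1 hu)⟩
  refine ⟨D₂, hD₂, ?_, hkeep⟩
  rw [Fintype.card_fin] at hcard
  rw [div_le_iff₀ (by norm_num [rho])]
  have : (#D₁ : ℝ) ≤ 2 * (16 * rho) * #D₂ := by exact_mod_cast hcard
  norm_num [rho] at this ⊢
  linarith

end TournamentPartition
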